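/- Let Ψ_{d,e}(s,q,k) := (d μ(d) μ(e) / (φ(d) e)) ∏_{p | eq/d} { (1 − p^{−s})^k ∑_{ν≥0} d_k(p^{ν+ν_p(eq/d)}) p^{−νs} }, where the product is over primes p dividing eq/d. Then for all s with Re s > 1/2 and for e | d | q, one has Ψ_{d,e}(s,q,k) ≪_{k,ε} q^{ε/2}. -/

import Mathlib

/-- The generalized divisor function `d_k`, the `k`-fold Dirichlet convolution of `1`. -/
noncomputable def dk (k n : ℕ) : ℕ := (ArithmeticFunction.zeta ^ k) n

/-- The local factor `Ψ_{d,e}(s,q,k)` of the Conrey–Gonek singular series: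
`Ψ_{d,e}(s,q,k) = (d μ(d) μ(e) / (φ(d) e)) ∏_{p ∣ eq/d} (1 - p^{-s})^k
  ∑_{ν ≥ 0} d_k(p^{ν + ν_p(eq/d)}) p^{-νs}`. -/
noncomputable def Psi (k q d e : ℕ) (s : ℂ) : ℂ :=
  ((d : ℂ) * (ArithmeticFunction.moebius d : ℤ) * (ArithmeticFunction.moebius e : ℤ)) /
      ((Nat.totient d : ℂ) * (e : ℂ)) *
    ∏ p ∈ (e * q / d).primeFactors,
      ((1 - (p : ℂ) ^ (-s)) ^ k *
        ∑' ν : ℕ, (dk k (p ^ (ν + (e * q / d).factorization p)) : ℂ) / (p : ℂ) ^ ((ν : ℂ) * s))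

/-!
Since `d_k(p^m) ≤ (m+1)^k` and `|p^{-νs}| ≤ 2^{-ν/2}`, the local factor at `p` with
`a = ν_p(eq/d)` is at most `2^k (a+1)^k ∑_n (n+1)^k 2^{-n/2}`, and `(a+1)^k ≪_δ 2^{δa} ≤ p^{δa}`;
so the product over `p ∣ m = eq/d` is `≪ A^{ω(m)} m^δ`. The prefactor is at most
`d/φ(d) ≤ 2^{ω(d)}`. As `m` and `d` divide `q`, everything is `≪ (2A)^{ω(q)} q^δ`, and
`A^{ω(n)} ≪_{A,δ} n^δ` because each prime `p ≥ A^{1/δ}` contributes at most `p^δ` while the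
smaller primes contribute a bounded factor.
-/

open ArithmeticFunction Finset
open scoped ArithmeticFunction.Moebius

lemma dk_prime_pow_le (k : ℕ) {p : ℕ} (hp : p.Prime) (m : ℕ) : dk k (p ^ m) ≤ (m + 1) ^ k := by
  induction k generalizing m with
  | zero =>
    rcases eq_or_ne (p ^ m) 1 with h | h
    · simp [dk, h]
    · simp [dk, one_apply_ne h]
  | succ k ih =>
    have hsum : dk (k + 1) (p ^ m) = ∑ j ∈ range (m + 1), dk k (p ^ j) := by
      rw [dk, pow_succ, mul_zeta_apply, Nat.sum_divisors_prime_pow hp]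
      rfl
    calc dk (k + 1) (p ^ m) ≤ ∑ _j ∈ range (m + 1), (m + 1) ^ k := by
          rw [hsum]
          refine sum_le_sum fun j hj => (ih j).trans (Nat.pow_le_pow_left ?_ k)
          simpa using hj
      _ = (m + 1) ^ (k + 1) := by rw [sum_const, card_range, smul_eq_mul, pow_succ']

lemma summable_add_one_pow_mul_geometric (k : ℕ) {r : ℝ} (hr₀ : 0 ≤ r) (hr₁ : r < 1) :
    Summable fun n : ℕ => ((n : ℝ) + 1) ^ k * r ^ n := by
  refine (summable_descFactorial_mul_geometric_of_norm_lt_one k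
    (by rwa [Real.norm_of_nonneg hr₀])).of_nonneg_of_le (fun n => by positivity) fun n => ?_
  have h := Nat.pow_sub_le_descFactorial (n + k) k
  rw [show n + k + 1 - k = n + 1 by omega] at h
  gcongr
  exact_mod_cast h

lemma exists_add_one_pow_le_mul_pow (k : ℕ) {y : ℝ} (hy : 1 < y) :
    ∃ C : ℝ, 1 ≤ C ∧ ∀ a : ℕ, ((a : ℝ) + 1) ^ k ≤ C * y ^ a := by
  have hy₀ : 0 < y := one_pos.trans hy
  have hsum := summable_add_one_pow_mul_geometric k (inv_nonneg.2 hy₀.le) (inv_lt_one_of_one_lt₀ hy)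
  refine ⟨∑' n : ℕ, ((n : ℝ) + 1) ^ k * y⁻¹ ^ n,
    by simpa using hsum.le_tsum 0 fun n _ => by positivity, fun a => ?_⟩
  calc ((a : ℝ) + 1) ^ k = ((a : ℝ) + 1) ^ k * y⁻¹ ^ a * y ^ a := by
        rw [inv_pow, mul_assoc, inv_mul_cancel₀ (by positivity), mul_one]
    _ ≤ _ := by gcongr; exact hsum.le_tsum a fun n _ => by positivity

lemma Nat.le_two_pow_card_primeFactors_mul_totient (n : ℕ) :
    n ≤ 2 ^ n.primeFactors.card * n.totient := by
  have hpos : 0 < ∏ p ∈ n.primeFactors, (p - 1) :=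
    prod_pos fun p hp => Nat.sub_pos_of_lt (Nat.prime_of_mem_primeFactors hp).one_lt
  have hprod :
      ∏ p ∈ n.primeFactors, p ≤ 2 ^ n.primeFactors.card * ∏ p ∈ n.primeFactors, (p - 1) := by
    rw [← prod_const, ← prod_mul_distrib]
    exact prod_le_prod' fun p hp => by have := (Nat.prime_of_mem_primeFactors hp).two_le; omega
  refine Nat.le_of_mul_le_mul_right ?_ hpos
  calc n * ∏ p ∈ n.primeFactors, (p - 1) = n.totient * ∏ p ∈ n.primeFactors, p :=
        (Nat.totient_mul_prod_primeFactors n).symm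
    _ ≤ n.totient * (2 ^ n.primeFactors.card * ∏ p ∈ n.primeFactors, (p - 1)) := by gcongr
    _ = 2 ^ n.primeFactors.card * n.totient * ∏ p ∈ n.primeFactors, (p - 1) := by ring

lemma Nat.prod_primeFactors_pow_factorization_rpow {n : ℕ} (hn : n ≠ 0) (δ : ℝ) :
    ∏ p ∈ n.primeFactors, ((p : ℝ) ^ n.factorization p) ^ δ = (n : ℝ) ^ δ := by
  rw [Real.finsetProd_rpow _ _ fun _ _ => by positivity]
  congr 1
  exact_mod_cast (Nat.prod_primeFactors_pow_factorization hn).symm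

lemma exists_pow_card_primeFactors_le {A : ℝ} (hA : 1 ≤ A) {δ : ℝ} (hδ : 0 < δ) :
    ∃ C : ℝ, 0 < C ∧ ∀ n : ℕ, n ≠ 0 → A ^ n.primeFactors.card ≤ C * (n : ℝ) ^ δ := by
  obtain ⟨P, hP⟩ := exists_nat_ge (A ^ δ⁻¹)
  refine ⟨A ^ P, by positivity, fun n hn => ?_⟩
  have hsmall : ∏ p ∈ n.primeFactors with p < P, A ≤ A ^ P := by
    rw [prod_const]
    refine pow_le_pow_right₀ hA ((card_le_card fun p hp => ?_).trans (card_range P).le)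
    simpa using (mem_filter.1 hp).2
  have hlarge : ∏ p ∈ n.primeFactors with ¬p < P, A ≤ (n : ℝ) ^ δ := by
    calc ∏ p ∈ n.primeFactors with ¬p < P, A
        ≤ ∏ p ∈ n.primeFactors with ¬p < P, (p : ℝ) ^ δ := by
          refine prod_le_prod (fun _ _ => by positivity) fun p hp => ?_
          calc A = (A ^ δ⁻¹) ^ δ := (Real.rpow_inv_rpow (by positivity) hδ.ne').symm
            _ ≤ (p : ℝ) ^ δ := by
              gcongr
              exact hP.trans (by exact_mod_cast not_lt.1 (mem_filter.1 hp).2)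
      _ = ((∏ p ∈ n.primeFactors with ¬p < P, p : ℕ) : ℝ) ^ δ := by
          rw [Nat.cast_prod, Real.finsetProd_rpow _ _ fun _ _ => by positivity]
      _ ≤ (n : ℝ) ^ δ := by
          gcongr
          exact_mod_cast Nat.le_of_dvd (Nat.pos_of_ne_zero hn) <|
            (prod_dvd_prod_of_subset _ _ _ (filter_subset _ _)).trans n.prod_primeFactors_dvd
  rw [← prod_const, ← prod_filter_mul_prod_filter_not _ (· < P)]
  exact mul_le_mul hsmall hlarge (prod_nonneg fun _ _ => by positivity) (by positivity)

lemma Nat.mul_div_mul_div_cancel {q d e : ℕ} (hd : 0 < d) (hdq : d ∣ q) (hed : e ∣ d) :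
    e * q / d * (d / e) = q := by
  obtain ⟨t, rfl⟩ := hed
  obtain ⟨u, rfl⟩ := hdq
  have he : 0 < e := Nat.pos_of_mul_pos_right hd
  have ht : 0 < t := Nat.pos_of_mul_pos_left hd
  rw [show e * (e * t * u) = e * u * (e * t) by ring, Nat.mul_div_cancel _ hd,
    Nat.mul_div_cancel_left _ he]
  ring

lemma sqrt_two_pow_le_norm_natCast_cpow {p : ℕ} (hp : 2 ≤ p) {s : ℂ} (hs : 1 / 2 ≤ s.re) (ν : ℕ) :
    √2 ^ ν ≤ ‖(p : ℂ) ^ ((ν : ℂ) * s)‖ := by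
  have hp' : (2 : ℝ) ≤ p := by exact_mod_cast hp
  rw [Complex.norm_natCast_cpow_of_pos (by omega),
    show ((ν : ℂ) * s).re = s.re * ν by simp [mul_comm],
    Real.rpow_mul_natCast (by positivity)]
  gcongr
  calc √2 = (2 : ℝ) ^ (1 / 2 : ℝ) := Real.sqrt_eq_rpow 2
    _ ≤ (p : ℝ) ^ (1 / 2 : ℝ) := by gcongr
    _ ≤ (p : ℝ) ^ s.re := Real.rpow_le_rpow_of_exponent_le (by linarith) hs

lemma norm_tsum_dk_div_cpow_le (k a : ℕ) {p : ℕ} (hp : p.Prime) {s : ℂ} (hs : 1 / 2 ≤ s.re) :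
    ‖∑' ν : ℕ, (dk k (p ^ (ν + a)) : ℂ) / (p : ℂ) ^ ((ν : ℂ) * s)‖ ≤
      ((a : ℝ) + 1) ^ k * ∑' ν : ℕ, ((ν : ℝ) + 1) ^ k * (√2)⁻¹ ^ ν := by
  have hsum := summable_add_one_pow_mul_geometric k (by positivity)
    (inv_lt_one_of_one_lt₀ Real.one_lt_sqrt_two)
  refine tsum_of_norm_bounded (hsum.hasSum.mul_left _) fun ν => ?_
  have hdk : (dk k (p ^ (ν + a)) : ℝ) ≤ (((a : ℝ) + 1) * ((ν : ℝ) + 1)) ^ k := by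
    calc (dk k (p ^ (ν + a)) : ℝ) ≤ (((ν + a + 1 : ℕ)) : ℝ) ^ k := by
          exact_mod_cast dk_prime_pow_le k hp (ν + a)
      _ ≤ (((a : ℝ) + 1) * ((ν : ℝ) + 1)) ^ k := by
          gcongr
          push_cast
          nlinarith [(Nat.cast_nonneg ν : (0 : ℝ) ≤ ν), (Nat.cast_nonneg a : (0 : ℝ) ≤ a)]
  rw [norm_div, Complex.norm_natCast, inv_pow, ← mul_assoc, ← mul_pow, ← div_eq_mul_inv]
  exact div_le_div₀ (by positivity) hdk (by positivity)
    (sqrt_two_pow_le_norm_natCast_cpow hp.two_le hs ν)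

noncomputable def psiLocalFactor (k p a : ℕ) (s : ℂ) : ℂ :=
  (1 - (p : ℂ) ^ (-s)) ^ k * ∑' ν : ℕ, (dk k (p ^ (ν + a)) : ℂ) / (p : ℂ) ^ ((ν : ℂ) * s)

lemma norm_one_sub_natCast_cpow_neg_le_two {p : ℕ} (hp : 0 < p) {s : ℂ} (hs : 0 ≤ s.re) :
    ‖1 - (p : ℂ) ^ (-s)‖ ≤ 2 := by
  have : ‖(p : ℂ) ^ (-s)‖ ≤ 1 := by
    rw [Complex.norm_natCast_cpow_of_pos hp]
    exact Real.rpow_le_one_of_one_le_of_nonpos (by exact_mod_cast hp) (by simpa using hs)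
  calc ‖1 - (p : ℂ) ^ (-s)‖ ≤ ‖(1 : ℂ)‖ + ‖(p : ℂ) ^ (-s)‖ := norm_sub_le _ _
    _ ≤ 2 := by rw [norm_one]; linarith

lemma exists_norm_psiLocalFactor_le (k : ℕ) {δ : ℝ} (hδ : 0 < δ) :
    ∃ A : ℝ, 1 ≤ A ∧ ∀ p a : ℕ, p.Prime → ∀ s : ℂ, 1 / 2 ≤ s.re →
      ‖psiLocalFactor k p a s‖ ≤ A * ((p : ℝ) ^ a) ^ δ := by
  obtain ⟨C, hC, hpoly⟩ := exists_add_one_pow_le_mul_pow k (Real.one_lt_rpow one_lt_two hδ)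
  set B := ∑' ν : ℕ, ((ν : ℝ) + 1) ^ k * (√2)⁻¹ ^ ν
  have hB : 0 ≤ B := tsum_nonneg fun _ => by positivity
  refine ⟨max 1 (2 ^ k * C * B), le_max_left _ _, fun p a hp s hs => ?_⟩
  have hp2 : (2 : ℝ) ≤ p := by exact_mod_cast hp.two_le
  calc ‖psiLocalFactor k p a s‖
      = ‖1 - (p : ℂ) ^ (-s)‖ ^ k *
          ‖∑' ν : ℕ, (dk k (p ^ (ν + a)) : ℂ) / (p : ℂ) ^ ((ν : ℂ) * s)‖ := by
        rw [psiLocalFactor, norm_mul, norm_pow]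
    _ ≤ 2 ^ k * (((a : ℝ) + 1) ^ k * B) := by
        gcongr
        · exact norm_one_sub_natCast_cpow_neg_le_two hp.pos (by linarith)
        · exact norm_tsum_dk_div_cpow_le k a hp hs
    _ ≤ 2 ^ k * (C * ((2 : ℝ) ^ δ) ^ a * B) := by gcongr; exact hpoly a
    _ ≤ 2 ^ k * (C * ((p : ℝ) ^ δ) ^ a * B) := by gcongr
    _ = 2 ^ k * C * B * ((p : ℝ) ^ a) ^ δ := by rw [Real.rpow_pow_comm (by positivity)]; ring
    _ ≤ max 1 (2 ^ k * C * B) * ((p : ℝ) ^ a) ^ δ := by gcongr; exact le_max_right _ _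

lemma norm_mul_moebius_div_totient_le {d : ℕ} (hd : 0 < d) (e : ℕ) :
    ‖((d : ℂ) * (μ d : ℤ) * (μ e : ℤ)) / ((d.totient : ℂ) * (e : ℂ))‖ ≤
      2 ^ d.primeFactors.card := by
  rw [norm_div, norm_mul, norm_mul, norm_mul, Complex.norm_natCast, Complex.norm_natCast,
    Complex.norm_natCast, Complex.norm_intCast, Complex.norm_intCast]
  rcases e.eq_zero_or_pos with rfl | he
  · simp
  have hφ : (0 : ℝ) < d.totient := by exact_mod_cast Nat.totient_pos.2 hd
  have he : (1 : ℝ) ≤ e := by exact_mod_cast he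
  have hμ (n : ℕ) : |((μ n : ℤ) : ℝ)| ≤ 1 := by exact_mod_cast abs_moebius_le_one
  rw [div_le_iff₀ (by positivity)]
  calc (d : ℝ) * |((μ d : ℤ) : ℝ)| * |((μ e : ℤ) : ℝ)| ≤ d * 1 * 1 := by gcongr <;> exact hμ _
    _ ≤ 2 ^ d.primeFactors.card * d.totient := by
        rw [mul_one, mul_one]
        exact_mod_cast Nat.le_two_pow_card_primeFactors_mul_totient d
    _ ≤ 2 ^ d.primeFactors.card * (d.totient * e) := by
        gcongr
        exact le_mul_of_one_le_right hφ.le he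

lemma norm_Psi_le {k q d e : ℕ} (hd : 0 < d) (hm : e * q / d ≠ 0) {s : ℂ} {A δ : ℝ}
    (hlocal : ∀ p ∈ (e * q / d).primeFactors, ‖psiLocalFactor k p ((e * q / d).factorization p) s‖ ≤
      A * ((p : ℝ) ^ (e * q / d).factorization p) ^ δ) :
    ‖Psi k q d e s‖ ≤ 2 ^ d.primeFactors.card *
      (A ^ (e * q / d).primeFactors.card * ((e * q / d : ℕ) : ℝ) ^ δ) := by
  rw [Psi, norm_mul, norm_prod]
  gcongr
  · exact norm_mul_moebius_div_totient_le hd e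
  · calc _ ≤ ∏ p ∈ (e * q / d).primeFactors, A * ((p : ℝ) ^ (e * q / d).factorization p) ^ δ :=
          prod_le_prod (fun _ _ => norm_nonneg _) hlocal
      _ = _ := by rw [prod_mul_distrib, prod_const, Nat.prod_primeFactors_pow_factorization_rpow hm]

theorem Psi_bound_general (k : ℕ) (ε : ℝ) (hε : 0 < ε) :
    ∃ C : ℝ, 0 < C ∧ ∀ q d e : ℕ, 0 < q → d ∣ q → e ∣ d → ∀ s : ℂ, 1 / 2 < s.re →
      ‖Psi k q d e s‖ ≤ C * (q : ℝ) ^ (ε / 2) := by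
  obtain ⟨A, hA, hlocal⟩ := exists_norm_psiLocalFactor_le k (by positivity : 0 < ε / 4)
  obtain ⟨C, hC, hω⟩ :=
    exists_pow_card_primeFactors_le (by linarith : 1 ≤ 2 * A) (by positivity : 0 < ε / 4)
  refine ⟨C, hC, fun q d e hq hdq hed s hs => ?_⟩
  have hd : 0 < d := Nat.pos_of_dvd_of_pos hdq hq
  have hcancel := Nat.mul_div_mul_div_cancel hd hdq hed
  have hm : e * q / d ≠ 0 := fun hm => by rw [hm, zero_mul] at hcancel; omega
  have hmq : e * q / d ∣ q := Dvd.intro _ hcancel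
  calc ‖Psi k q d e s‖
      ≤ 2 ^ d.primeFactors.card *
          (A ^ (e * q / d).primeFactors.card * ((e * q / d : ℕ) : ℝ) ^ (ε / 4)) :=
        norm_Psi_le hd hm fun p hp => hlocal p _ (Nat.prime_of_mem_primeFactors hp) s hs.le
    _ ≤ 2 ^ q.primeFactors.card * (A ^ q.primeFactors.card * (q : ℝ) ^ (ε / 4)) := by
        gcongr
        · norm_num
        · exact Nat.primeFactors_mono hdq hq.ne'
        · exact Nat.primeFactors_mono hmq hq.ne'
        · exact_mod_cast Nat.le_of_dvd hq hmq
    _ = (2 * A) ^ q.primeFactors.card * (q : ℝ) ^ (ε / 4) := by ring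
    _ ≤ C * (q : ℝ) ^ (ε / 4) * (q : ℝ) ^ (ε / 4) := by gcongr; exact hω q hq.ne'
    _ = C * (q : ℝ) ^ (ε / 2) := by
        rw [mul_assoc, ← Real.rpow_add (by positivity)]
        ring_nf

/-- For `Re s > 1/2` and `e ∣ d ∣ q`, `Ψ_{d,e}(s,q,k) ≪_{k,ε} q^{ε/2}`. -/
theorem Psi_bound (k : ℕ) (hk : 2 ≤ k) (ε : ℝ) (hε : 0 < ε) :
    ∃ C : ℝ, 0 < C ∧ ∀ q d e : ℕ, 0 < q → d ∣ q → e ∣ d → ∀ s : ℂ, 1 / 2 < s.re →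
      ‖Psi k q d e s‖ ≤ C * (q : ℝ) ^ (ε / 2) :=
  Psi_bound_general k ε hε
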